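/- Let E and E' be real Hilbert spaces, X ⊆ E and Y ⊆ E' nonempty closed convex sets each of diameter at most D, and F : E × E' → ℝ a differentiable function that is convex-concave on X × Y, with saddle operator G(x,y) = (∇_x F(x,y), −∇_y F(x,y)). Assume G is monotone and ℓ-Lipschitz on X × Y and ‖G(z)‖ ≤ L for all z ∈ X × Y. Let T ≥ 1, set α = 1/(ℓ√T), and fix z₀, z₀' ∈ X × Y with ‖z₀ − z₀'‖² ≤ δ². Define two gradient descent ascent trajectories z_{t+1} = Π_{X×Y}(z_t − α·G(z_t)) and z'_{t+1} = Π_{X×Y}(z'_t − α·G(z'_t)) for t = 0, …, T−1, and let z̄_T = (1/T)·Σ_{t=0}^{T−1} z_t and z̄'_T = (1/T)·Σ_{t=0}^{T−1} z'_t. Then ‖z̄_T − z̄'_T‖² ≤ e·δ², and moreover F(x̄_T, y) − F(x, ȳ_T) ≤ (ℓD² + L²/(2ℓ))/√T for every (x,y) ∈ X × Y, where z̄_T = (x̄_T, ȳ_T). -/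

import Mathlib

/-!
Projection onto a convex set is nonexpansive, so one projected step from two points stretches
their squared distance by at most `1 + α²ℓ² = 1 + 1/T`: the cross term has the right sign by
monotonicity of `G`, and the quadratic term is controlled by its Lipschitz constant. After at
most `T` steps the factor is `(1 + 1/T)^T ≤ e`, and averaging does not increase the bound.

For the gap, the first-order characterisations of convexity in `x` and concavity in `y` bound
`F(x_t, y) - F(x, y_t)` by `⟪G(z_t), z_t - w⟫` with `w = (x, y)`. The usual telescoping of
`‖z_t - w‖²` over projected steps bounds the sum of these by `(‖z_0 - w‖² + Tα²L²)/(2α)`, and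
Jensen's inequality transfers the averaged bound to the averaged iterate.
-/

open RealInnerProductSpace

noncomputable section

variable {E E' : Type*} [NormedAddCommGroup E] [InnerProductSpace ℝ E] [CompleteSpace E]
  [NormedAddCommGroup E'] [InnerProductSpace ℝ E'] [CompleteSpace E']

/-- The saddle operator `G(x,y) = (∇ₓ F(x,y), −∇_y F(x,y))` on the Hilbert product
`WithLp 2 (E × E')`. -/
def saddleOp (F : E × E' → ℝ) (z : WithLp 2 (E × E')) : WithLp 2 (E × E') :=
  (WithLp.equiv 2 (E × E')).symm
    (gradient (fun u => F (u, (WithLp.equiv 2 (E × E') z).2)) (WithLp.equiv 2 (E × E') z).1,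
     -gradient (fun v => F ((WithLp.equiv 2 (E × E') z).1, v)) (WithLp.equiv 2 (E × E') z).2)

/-- `X × Y` as a subset of the Hilbert product. -/
def prodSet (X : Set E) (Y : Set E') : Set (WithLp 2 (E × E')) :=
  (WithLp.equiv 2 (E × E')) ⁻¹' (X ×ˢ Y)

/-- `p` is the metric projection of `v` onto `S`. -/
def IsProjOn {H : Type*} [NormedAddCommGroup H] (S : Set H) (v p : H) : Prop :=
  p ∈ S ∧ ∀ w ∈ S, ‖v - p‖ ≤ ‖v - w‖

theorem IsProjOn.self {H : Type*} [NormedAddCommGroup H] {S : Set H} {w : H} (hw : w ∈ S) :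
    IsProjOn S w w :=
  ⟨hw, fun u _ => by simp⟩

section ProjectedGradient

variable {H : Type*} [NormedAddCommGroup H] [InnerProductSpace ℝ H] {S : Set H}

theorem IsProjOn.inner_sub_nonpos (hS : Convex ℝ S) {v p w : H} (h : IsProjOn S v p)
    (hw : w ∈ S) : ⟪v - p, w - p⟫ ≤ 0 := by
  have : Nonempty S := ⟨⟨p, h.1⟩⟩
  refine (norm_eq_iInf_iff_real_inner_le_zero hS h.1).mp (le_antisymm ?_ ?_) w hw
  · exact le_ciInf fun u => h.2 u u.2
  · exact ciInf_le ⟨0, by rintro r ⟨u, rfl⟩; positivity⟩ (⟨p, h.1⟩ : S)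

theorem IsProjOn.norm_sub_le_norm_sub (hS : Convex ℝ S) {v p v' p' : H} (h : IsProjOn S v p)
    (h' : IsProjOn S v' p') : ‖p - p'‖ ≤ ‖v - v'‖ := by
  have h₁ := h.inner_sub_nonpos hS h'.1
  have h₂ := h'.inner_sub_nonpos hS h.1
  have hsq : ‖p - p'‖ ^ 2 ≤ ‖v - v'‖ * ‖p - p'‖ := by
    have hsplit : ⟪v - v', p - p'⟫ - ‖p - p'‖ ^ 2 = -⟪v - p, p' - p⟫ - ⟪v' - p', p - p'⟫ := by
      rw [← real_inner_self_eq_norm_sq]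
      simp only [inner_sub_left, inner_sub_right, real_inner_comm]
      ring
    linarith [real_inner_le_norm (v - v') (p - p')]
  nlinarith [norm_nonneg (p - p'), norm_nonneg (v - v')]

theorem norm_sub_smul_sq (a b : H) (α : ℝ) :
    ‖a - α • b‖ ^ 2 = ‖a‖ ^ 2 - 2 * α * ⟪a, b⟫ + α ^ 2 * ‖b‖ ^ 2 := by
  rw [norm_sub_sq_real, real_inner_smul_right, norm_smul, mul_pow, Real.norm_eq_abs, sq_abs]
  ring

theorem IsProjOn.two_mul_inner_le (hS : Convex ℝ S) {u g p w : H} {α : ℝ}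
    (h : IsProjOn S (u - α • g) p) (hw : w ∈ S) :
    2 * α * ⟪g, u - w⟫ ≤ ‖u - w‖ ^ 2 - ‖p - w‖ ^ 2 + α ^ 2 * ‖g‖ ^ 2 := by
  have hle := pow_le_pow_left₀ (norm_nonneg _) (h.norm_sub_le_norm_sub hS (IsProjOn.self hw)) 2
  rw [show u - α • g - w = (u - w) - α • g by abel, norm_sub_smul_sq, real_inner_comm] at hle
  linarith

theorem IsProjOn.norm_sub_sq_le_of_inner_nonneg (hS : Convex ℝ S) {u u' g g' p p' : H}
    {α ℓ : ℝ} (h : IsProjOn S (u - α • g) p) (h' : IsProjOn S (u' - α • g') p') (hα : 0 ≤ α)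
    (hmono : 0 ≤ ⟪g - g', u - u'⟫) (hlip : ‖g - g'‖ ≤ ℓ * ‖u - u'‖) :
    ‖p - p'‖ ^ 2 ≤ (1 + α ^ 2 * ℓ ^ 2) * ‖u - u'‖ ^ 2 := by
  have hle := pow_le_pow_left₀ (norm_nonneg _) (h.norm_sub_le_norm_sub hS h') 2
  rw [show u - α • g - (u' - α • g') = (u - u') - α • (g - g') by rw [smul_sub]; abel,
    norm_sub_smul_sq, real_inner_comm] at hle
  have hlip2 : ‖g - g'‖ ^ 2 ≤ ℓ ^ 2 * ‖u - u'‖ ^ 2 := by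
    rw [← mul_pow]; exact pow_le_pow_left₀ (norm_nonneg _) hlip 2
  have := mul_le_mul_of_nonneg_left hlip2 (sq_nonneg α)
  nlinarith [mul_nonneg hα hmono]

def IsProjGradSeq (S : Set H) (G : H → H) (α : ℝ) (T : ℕ) (z : ℕ → H) : Prop :=
  ∀ t < T, IsProjOn S (z t - α • G (z t)) (z (t + 1))

namespace IsProjGradSeq

variable {G : H → H} {α : ℝ} {T : ℕ} {z z' : ℕ → H}

theorem mem (hz : IsProjGradSeq S G α T z) (hz0 : z 0 ∈ S) : ∀ t ≤ T, z t ∈ S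
  | 0, _ => hz0
  | t + 1, ht => (hz t ht).1

theorem norm_sub_sq_le (hS : Convex ℝ S) (hz : IsProjGradSeq S G α T z)
    (hz' : IsProjGradSeq S G α T z') (hz0 : z 0 ∈ S) (hz0' : z' 0 ∈ S) (hα : 0 ≤ α) {ℓ : ℝ}
    (hmono : ∀ u ∈ S, ∀ u' ∈ S, 0 ≤ ⟪G u - G u', u - u'⟫)
    (hlip : ∀ u ∈ S, ∀ u' ∈ S, ‖G u - G u'‖ ≤ ℓ * ‖u - u'‖) :
    ∀ t ≤ T, ‖z t - z' t‖ ^ 2 ≤ (1 + α ^ 2 * ℓ ^ 2) ^ t * ‖z 0 - z' 0‖ ^ 2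
  | 0, _ => by simp
  | t + 1, ht => by
    have hu := hz.mem hz0 t (Nat.le_of_succ_le ht)
    have hu' := hz'.mem hz0' t (Nat.le_of_succ_le ht)
    calc ‖z (t + 1) - z' (t + 1)‖ ^ 2 ≤ (1 + α ^ 2 * ℓ ^ 2) * ‖z t - z' t‖ ^ 2 :=
          (hz t ht).norm_sub_sq_le_of_inner_nonneg hS (hz' t ht) hα (hmono _ hu _ hu')
            (hlip _ hu _ hu')
      _ ≤ (1 + α ^ 2 * ℓ ^ 2) * ((1 + α ^ 2 * ℓ ^ 2) ^ t * ‖z 0 - z' 0‖ ^ 2) := by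
          gcongr; exact norm_sub_sq_le hS hz hz' hz0 hz0' hα hmono hlip t (Nat.le_of_succ_le ht)
      _ = (1 + α ^ 2 * ℓ ^ 2) ^ (t + 1) * ‖z 0 - z' 0‖ ^ 2 := by ring

theorem two_mul_sum_inner_le (hS : Convex ℝ S) (hz : IsProjGradSeq S G α T z) (hz0 : z 0 ∈ S)
    {L : ℝ} (hL : ∀ u ∈ S, ‖G u‖ ≤ L) {w : H} (hw : w ∈ S) :
    2 * α * ∑ t ∈ Finset.range T, ⟪G (z t), z t - w⟫ ≤ ‖z 0 - w‖ ^ 2 + T * (α ^ 2 * L ^ 2) := by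
  have hstep : ∀ t ∈ Finset.range T, 2 * α * ⟪G (z t), z t - w⟫ ≤
      ‖z t - w‖ ^ 2 - ‖z (t + 1) - w‖ ^ 2 + α ^ 2 * L ^ 2 := by
    intro t htT
    have ht := Finset.mem_range.mp htT
    have hG := pow_le_pow_left₀ (norm_nonneg _) (hL _ (hz.mem hz0 t ht.le)) 2
    have := (hz t ht).two_mul_inner_le hS hw
    have := mul_le_mul_of_nonneg_left hG (sq_nonneg α)
    linarith
  calc 2 * α * ∑ t ∈ Finset.range T, ⟪G (z t), z t - w⟫
      ≤ ∑ t ∈ Finset.range T, (‖z t - w‖ ^ 2 - ‖z (t + 1) - w‖ ^ 2 + α ^ 2 * L ^ 2) := by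
        rw [Finset.mul_sum]; exact Finset.sum_le_sum hstep
    _ = ‖z 0 - w‖ ^ 2 - ‖z T - w‖ ^ 2 + T * (α ^ 2 * L ^ 2) := by
        rw [Finset.sum_add_distrib, Finset.sum_range_sub', Finset.sum_const, Finset.card_range,
          nsmul_eq_mul]
    _ ≤ ‖z 0 - w‖ ^ 2 + T * (α ^ 2 * L ^ 2) := by linarith [sq_nonneg ‖z T - w‖]

end IsProjGradSeq

end ProjectedGradient

theorem norm_inv_smul_sum_sq_le {V : Type*} [SeminormedAddCommGroup V] [NormedSpace ℝ V]
    {T : ℕ} (hT : 0 < T) {v : ℕ → V} {M : ℝ} (hv : ∀ t < T, ‖v t‖ ^ 2 ≤ M) :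
    ‖(T : ℝ)⁻¹ • ∑ t ∈ Finset.range T, v t‖ ^ 2 ≤ M := by
  have hM : 0 ≤ M := (sq_nonneg _).trans (hv 0 hT)
  have hT' : (0 : ℝ) < T := by exact_mod_cast hT
  suffices ‖(T : ℝ)⁻¹ • ∑ t ∈ Finset.range T, v t‖ ≤ √M from
    (Real.le_sqrt (norm_nonneg _) hM).mp this
  calc ‖(T : ℝ)⁻¹ • ∑ t ∈ Finset.range T, v t‖
      ≤ (T : ℝ)⁻¹ * ∑ t ∈ Finset.range T, ‖v t‖ := by
        rw [norm_smul, Real.norm_of_nonneg (by positivity)]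
        gcongr; exact norm_sum_le _ _
    _ ≤ (T : ℝ)⁻¹ * ∑ _t ∈ Finset.range T, √M := by
        gcongr with t ht
        exact (Real.le_sqrt (norm_nonneg _) hM).mpr (hv t (Finset.mem_range.mp ht))
    _ = √M := by rw [Finset.sum_const, Finset.card_range, nsmul_eq_mul]; field_simp

theorem ConvexOn.le_sub_of_hasFDerivAt {V : Type*} [NormedAddCommGroup V] [NormedSpace ℝ V]
    {s : Set V} {f : V → ℝ} {f' : V →L[ℝ] ℝ} {x u : V} (hf : ConvexOn ℝ s f) (hx : x ∈ s)
    (hu : u ∈ s) (hd : HasFDerivAt f f' x) : f' (u - x) ≤ f u - f x := by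
  have hline : ConvexOn ℝ (Set.Icc (0 : ℝ) 1) (f ∘ AffineMap.lineMap x u) :=
    (hf.comp_affineMap _).subset (fun _ ht => hf.1.lineMap_mem hx hu ht) (convex_Icc 0 1)
  have hd' : HasDerivAt (f ∘ AffineMap.lineMap x u) (f' (u - x)) (0 : ℝ) := by
    refine HasFDerivAt.comp_hasDerivAt (0 : ℝ) ?_ AffineMap.hasDerivAt_lineMap
    simpa using hd
  simpa [slope_def_field] using
    hline.le_slope_of_hasDerivAt (by simp) (by simp) zero_lt_one hd'

theorem ConcaveOn.sub_le_of_hasFDerivAt {V : Type*} [NormedAddCommGroup V] [NormedSpace ℝ V]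
    {s : Set V} {f : V → ℝ} {f' : V →L[ℝ] ℝ} {x u : V} (hf : ConcaveOn ℝ s f) (hx : x ∈ s)
    (hu : u ∈ s) (hd : HasFDerivAt f f' x) : f u - f x ≤ f' (u - x) := by
  have := hf.neg.le_sub_of_hasFDerivAt hx hu hd.neg
  simp only [neg_apply, Pi.neg_apply] at this
  linarith

section ProdSet

variable {E₁ E₂ : Type*} {X : Set E₁} {Y : Set E₂}

theorem mem_prodSet {z : WithLp 2 (E₁ × E₂)} : z ∈ prodSet X Y ↔ z.fst ∈ X ∧ z.snd ∈ Y :=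
  Iff.rfl

variable [NormedAddCommGroup E₁] [NormedAddCommGroup E₂]

theorem norm_sub_sq_le_of_mem_prodSet {D : ℝ} (hXD : ∀ s₁ ∈ X, ∀ s₂ ∈ X, ‖s₁ - s₂‖ ≤ D)
    (hYD : ∀ s₁ ∈ Y, ∀ s₂ ∈ Y, ‖s₁ - s₂‖ ≤ D) {z w : WithLp 2 (E₁ × E₂)}
    (hz : z ∈ prodSet X Y) (hw : w ∈ prodSet X Y) : ‖z - w‖ ^ 2 ≤ 2 * D ^ 2 := by
  rw [WithLp.prod_norm_sq_eq_of_L2, WithLp.sub_fst, WithLp.sub_snd]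
  obtain ⟨hzX, hzY⟩ := mem_prodSet.mp hz
  obtain ⟨hwX, hwY⟩ := mem_prodSet.mp hw
  have h₁ := pow_le_pow_left₀ (norm_nonneg _) (hXD _ hzX _ hwX) 2
  have h₂ := pow_le_pow_left₀ (norm_nonneg _) (hYD _ hzY _ hwY) 2
  linarith

variable [NormedSpace ℝ E₁] [NormedSpace ℝ E₂]

theorem convex_prodSet (hX : Convex ℝ X) (hY : Convex ℝ Y) : Convex ℝ (prodSet X Y) :=
  fun _ hz₁ _ hz₂ _ _ ha hb hab => ⟨hX hz₁.1 hz₂.1 ha hb hab, hY hz₁.2 hz₂.2 ha hb hab⟩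

theorem sub_le_inv_mul_sum_sub {F : E₁ × E₂ → ℝ} {x : E₁} {y : E₂}
    (hcvx : ConvexOn ℝ X fun u => F (u, y)) (hccv : ConcaveOn ℝ Y fun v => F (x, v)) {T : ℕ}
    (hT : 0 < T) {z : ℕ → WithLp 2 (E₁ × E₂)} (hz : ∀ t < T, z t ∈ prodSet X Y) :
    F (((T : ℝ)⁻¹ • ∑ t ∈ Finset.range T, z t).fst, y) -
        F (x, ((T : ℝ)⁻¹ • ∑ t ∈ Finset.range T, z t).snd) ≤
      (T : ℝ)⁻¹ * ∑ t ∈ Finset.range T, (F ((z t).fst, y) - F (x, (z t).snd)) := by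
  have hw : ∑ _t ∈ Finset.range T, (T : ℝ)⁻¹ = 1 := by
    rw [Finset.sum_const, Finset.card_range, nsmul_eq_mul]
    exact mul_inv_cancel₀ (by positivity)
  have hz' : ∀ t ∈ Finset.range T, (z t).fst ∈ X ∧ (z t).snd ∈ Y :=
    fun t ht => mem_prodSet.mp (hz t (Finset.mem_range.mp ht))
  have h₁ := hcvx.map_sum_le (fun _ _ => by positivity) hw fun t ht => (hz' t ht).1
  have h₂ := hccv.le_map_sum (fun _ _ => by positivity) hw fun t ht => (hz' t ht).2
  simp only [smul_eq_mul] at h₁ h₂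
  have hfst : ((T : ℝ)⁻¹ • ∑ t ∈ Finset.range T, z t).fst =
      ∑ t ∈ Finset.range T, (T : ℝ)⁻¹ • (z t).fst := by
    rw [Finset.smul_sum]; exact map_sum (WithLp.fstₗ 2 ℝ E₁ E₂) _ _
  have hsnd : ((T : ℝ)⁻¹ • ∑ t ∈ Finset.range T, z t).snd =
      ∑ t ∈ Finset.range T, (T : ℝ)⁻¹ • (z t).snd := by
    rw [Finset.smul_sum]; exact map_sum (WithLp.sndₗ 2 ℝ E₁ E₂) _ _
  simp only [hfst, hsnd, Finset.mul_sum, mul_sub, Finset.sum_sub_distrib]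
  linarith

end ProdSet

section Saddle

variable {X : Set E} {Y : Set E'} {F : E × E' → ℝ}

theorem sub_le_inner_saddleOp (hF : Differentiable ℝ F)
    (hcvx : ∀ y ∈ Y, ConvexOn ℝ X fun x => F (x, y))
    (hccv : ∀ x ∈ X, ConcaveOn ℝ Y fun y => F (x, y)) {z w : WithLp 2 (E × E')}
    (hz : z ∈ prodSet X Y) (hw : w ∈ prodSet X Y) :
    F (z.fst, w.snd) - F (w.fst, z.snd) ≤ ⟪saddleOp F z, z - w⟫ := by
  obtain ⟨hzX, hzY⟩ := mem_prodSet.mp hz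
  obtain ⟨hwX, hwY⟩ := mem_prodSet.mp hw
  have hdx : DifferentiableAt ℝ (fun u => F (u, z.snd)) z.fst :=
    (hF.comp (differentiable_id.prodMk (differentiable_const _))).differentiableAt
  have hdy : DifferentiableAt ℝ (fun v => F (z.fst, v)) z.snd :=
    (hF.comp ((differentiable_const _).prodMk differentiable_id)).differentiableAt
  have hx := (hcvx _ hzY).le_sub_of_hasFDerivAt hzX hwX hdx.hasFDerivAt
  have hy := (hccv _ hzX).sub_le_of_hasFDerivAt hzY hwY hdy.hasFDerivAt
  have hinner : ⟪saddleOp F z, z - w⟫ =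
      -fderiv ℝ (fun u => F (u, z.snd)) z.fst (w.fst - z.fst) +
        fderiv ℝ (fun v => F (z.fst, v)) z.snd (w.snd - z.snd) := by
    simp [saddleOp, inner_gradient_left]
  linarith

theorem IsProjGradSeq.saddle_gap_le (hX : Convex ℝ X) (hY : Convex ℝ Y) {D : ℝ}
    (hXD : ∀ s₁ ∈ X, ∀ s₂ ∈ X, ‖s₁ - s₂‖ ≤ D) (hYD : ∀ s₁ ∈ Y, ∀ s₂ ∈ Y, ‖s₁ - s₂‖ ≤ D)
    (hF : Differentiable ℝ F) (hcvx : ∀ y ∈ Y, ConvexOn ℝ X fun x => F (x, y))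
    (hccv : ∀ x ∈ X, ConcaveOn ℝ Y fun y => F (x, y)) {L : ℝ}
    (hL : ∀ z ∈ prodSet X Y, ‖saddleOp F z‖ ≤ L) {α : ℝ} {T : ℕ} {z : ℕ → WithLp 2 (E × E')}
    (hz : IsProjGradSeq (prodSet X Y) (saddleOp F) α T z) (hz0 : z 0 ∈ prodSet X Y)
    (hα : 0 < α) (hT : 0 < T) {x : E} {y : E'} (hx : x ∈ X) (hy : y ∈ Y) :
    F (((T : ℝ)⁻¹ • ∑ t ∈ Finset.range T, z t).fst, y) -
        F (x, ((T : ℝ)⁻¹ • ∑ t ∈ Finset.range T, z t).snd) ≤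
      D ^ 2 / (α * T) + α * L ^ 2 / 2 := by
  set w : WithLp 2 (E × E') := WithLp.toLp 2 (x, y)
  have hw : w ∈ prodSet X Y := ⟨hx, hy⟩
  have hmem := hz.mem hz0
  have hgap : ∑ t ∈ Finset.range T, (F ((z t).fst, y) - F (x, (z t).snd)) ≤
      ∑ t ∈ Finset.range T, ⟪saddleOp F (z t), z t - w⟫ :=
    Finset.sum_le_sum fun t ht =>
      sub_le_inner_saddleOp hF hcvx hccv (hmem t (Finset.mem_range.mp ht).le) hw
  have hregret := hz.two_mul_sum_inner_le (convex_prodSet hX hY) hz0 hL hw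
  have hdiam := norm_sub_sq_le_of_mem_prodSet hXD hYD hz0 hw
  have hT' : (0 : ℝ) < T := by exact_mod_cast hT
  calc _ ≤ (T : ℝ)⁻¹ * ∑ t ∈ Finset.range T, (F ((z t).fst, y) - F (x, (z t).snd)) :=
        sub_le_inv_mul_sum_sub (hcvx y hy) (hccv x hx) hT fun t ht => hmem t ht.le
    _ ≤ (T : ℝ)⁻¹ * ∑ t ∈ Finset.range T, ⟪saddleOp F (z t), z t - w⟫ := by gcongr
    _ ≤ D ^ 2 / (α * T) + α * L ^ 2 / 2 := by
        rw [inv_mul_le_iff₀ hT', div_add_div _ _ (by positivity) two_ne_zero,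
          mul_div_assoc', le_div_iff₀ (by positivity)]
        nlinarith

end Saddle

theorem gda_inexact_initialization_general
    (X : Set E) (Y : Set E')
    (hXcv : Convex ℝ X) (hYcv : Convex ℝ Y)
    (D : ℝ) (hXD : ∀ s₁ ∈ X, ∀ s₂ ∈ X, ‖s₁ - s₂‖ ≤ D) (hYD : ∀ s₁ ∈ Y, ∀ s₂ ∈ Y, ‖s₁ - s₂‖ ≤ D)
    (F : E × E' → ℝ) (hFdiff : Differentiable ℝ F)
    (hcvx : ∀ y ∈ Y, ConvexOn ℝ X (fun x => F (x, y)))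
    (hccv : ∀ x ∈ X, ConcaveOn ℝ Y (fun y => F (x, y)))
    (ℓ : ℝ) (hℓ : 0 < ℓ)
    (hmono : ∀ z₁ ∈ prodSet X Y, ∀ z₂ ∈ prodSet X Y,
      0 ≤ ⟪saddleOp F z₁ - saddleOp F z₂, z₁ - z₂⟫)
    (hlip : ∀ z₁ ∈ prodSet X Y, ∀ z₂ ∈ prodSet X Y,
      ‖saddleOp F z₁ - saddleOp F z₂‖ ≤ ℓ * ‖z₁ - z₂‖)
    (L : ℝ) (hL : ∀ z ∈ prodSet X Y, ‖saddleOp F z‖ ≤ L)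
    (T : ℕ) (hT : 1 ≤ T) (α : ℝ) (hα : α = 1 / (ℓ * Real.sqrt T))
    (δ : ℝ)
    (z z' : ℕ → WithLp 2 (E × E'))
    (hz0 : z 0 ∈ prodSet X Y) (hz0' : z' 0 ∈ prodSet X Y)
    (hdev : ‖z 0 - z' 0‖ ^ 2 ≤ δ ^ 2)
    (hupd : ∀ t < T, IsProjOn (prodSet X Y) (z t - α • saddleOp F (z t)) (z (t + 1)))
    (hupd' : ∀ t < T, IsProjOn (prodSet X Y) (z' t - α • saddleOp F (z' t)) (z' (t + 1))) :
    ‖(T : ℝ)⁻¹ • ∑ t ∈ Finset.range T, z t - (T : ℝ)⁻¹ • ∑ t ∈ Finset.range T, z' t‖ ^ 2 ≤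
      Real.exp 1 * δ ^ 2 ∧
    ∀ x ∈ X, ∀ y ∈ Y,
      F ((WithLp.equiv 2 (E × E') ((T : ℝ)⁻¹ • ∑ t ∈ Finset.range T, z t)).1, y) -
        F (x, (WithLp.equiv 2 (E × E') ((T : ℝ)⁻¹ • ∑ t ∈ Finset.range T, z t)).2) ≤
      (ℓ * D ^ 2 + L ^ 2 / (2 * ℓ)) / Real.sqrt T := by
  have hT' : (0 : ℝ) < T := by exact_mod_cast hT
  have hα₀ : 0 < α := by rw [hα]; positivity
  have hαℓ : α ^ 2 * ℓ ^ 2 = (T : ℝ)⁻¹ := by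
    rw [hα, div_pow, mul_pow, Real.sq_sqrt hT'.le]; field_simp
  have hz : IsProjGradSeq (prodSet X Y) (saddleOp F) α T z := hupd
  refine ⟨?_, fun x hx y hy => ?_⟩
  · rw [← smul_sub, ← Finset.sum_sub_distrib]
    refine norm_inv_smul_sum_sq_le hT fun t ht => ?_
    calc ‖z t - z' t‖ ^ 2 ≤ (1 + α ^ 2 * ℓ ^ 2) ^ t * ‖z 0 - z' 0‖ ^ 2 :=
          hz.norm_sub_sq_le (convex_prodSet hXcv hYcv) hupd' hz0 hz0' hα₀.le hmono hlip t ht.le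
      _ ≤ (1 + (T : ℝ)⁻¹) ^ T * δ ^ 2 := by
          rw [hαℓ]
          gcongr
          exact le_add_of_nonneg_right (by positivity)
      _ ≤ Real.exp 1 * δ ^ 2 := by gcongr; exact Real.one_add_inv_pow_le_exp
  · calc _ ≤ D ^ 2 / (α * T) + α * L ^ 2 / 2 :=
          hz.saddle_gap_le hXcv hYcv hXD hYD hFdiff hcvx hccv hL hz0 hα₀ hT hx hy
      _ = (ℓ * D ^ 2 + L ^ 2 / (2 * ℓ)) / Real.sqrt T := by
          rw [hα]
          field_simp
          rw [Real.sq_sqrt hT'.le]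
          ring

/-- Theorem 4.2, part (i).  Gradient descent ascent with stepsize
`α = 1/(ℓ√T)` started from two initializations with `‖z₀ − z₀'‖² ≤ δ²` has averaged iterates
satisfying `‖z̄_T − z̄'_T‖² ≤ e·δ²`, and the duality gap of the averaged iterate is at most
`(ℓD² + L²/(2ℓ))/√T`. -/
theorem gda_inexact_initialization
    (X : Set E) (Y : Set E') (hXne : X.Nonempty) (hYne : Y.Nonempty)
    (hXcl : IsClosed X) (hYcl : IsClosed Y) (hXcv : Convex ℝ X) (hYcv : Convex ℝ Y)
    (D : ℝ) (hXD : ∀ s₁ ∈ X, ∀ s₂ ∈ X, ‖s₁ - s₂‖ ≤ D) (hYD : ∀ s₁ ∈ Y, ∀ s₂ ∈ Y, ‖s₁ - s₂‖ ≤ D)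
    (F : E × E' → ℝ) (hFdiff : Differentiable ℝ F)
    (hcvx : ∀ y ∈ Y, ConvexOn ℝ X (fun x => F (x, y)))
    (hccv : ∀ x ∈ X, ConcaveOn ℝ Y (fun y => F (x, y)))
    (ℓ : ℝ) (hℓ : 0 < ℓ)
    (hmono : ∀ z₁ ∈ prodSet X Y, ∀ z₂ ∈ prodSet X Y,
      0 ≤ ⟪saddleOp F z₁ - saddleOp F z₂, z₁ - z₂⟫)
    (hlip : ∀ z₁ ∈ prodSet X Y, ∀ z₂ ∈ prodSet X Y,
      ‖saddleOp F z₁ - saddleOp F z₂‖ ≤ ℓ * ‖z₁ - z₂‖)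
    (L : ℝ) (hL : ∀ z ∈ prodSet X Y, ‖saddleOp F z‖ ≤ L)
    (T : ℕ) (hT : 1 ≤ T) (α : ℝ) (hα : α = 1 / (ℓ * Real.sqrt T))
    (δ : ℝ)
    (z z' : ℕ → WithLp 2 (E × E'))
    (hz0 : z 0 ∈ prodSet X Y) (hz0' : z' 0 ∈ prodSet X Y)
    (hdev : ‖z 0 - z' 0‖ ^ 2 ≤ δ ^ 2)
    (hupd : ∀ t < T, IsProjOn (prodSet X Y) (z t - α • saddleOp F (z t)) (z (t + 1)))
    (hupd' : ∀ t < T, IsProjOn (prodSet X Y) (z' t - α • saddleOp F (z' t)) (z' (t + 1))) :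
    ‖(T : ℝ)⁻¹ • ∑ t ∈ Finset.range T, z t - (T : ℝ)⁻¹ • ∑ t ∈ Finset.range T, z' t‖ ^ 2 ≤
      Real.exp 1 * δ ^ 2 ∧
    ∀ x ∈ X, ∀ y ∈ Y,
      F ((WithLp.equiv 2 (E × E') ((T : ℝ)⁻¹ • ∑ t ∈ Finset.range T, z t)).1, y) -
        F (x, (WithLp.equiv 2 (E × E') ((T : ℝ)⁻¹ • ∑ t ∈ Finset.range T, z t)).2) ≤
      (ℓ * D ^ 2 + L ^ 2 / (2 * ℓ)) / Real.sqrt T :=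
  gda_inexact_initialization_general X Y hXcv hYcv D hXD hYD F hFdiff hcvx hccv ℓ hℓ hmono hlip L hL
    T hT α hα δ z z' hz0 hz0' hdev hupd hupd'
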